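/- arXiv:2101.05999 — 2 statements merged into one kernel-verified Lean document; each statement's English description precedes it below -/
import Mathlib

section
/- Let f be a loop-count function on states of n crossings that is B-pseudo-adequate, i.e. f(Function.update s_B i false) ≤ f(s_B) for every index i. Then for every state s with α(s) ≥ 1, one has f(s) ≤ f(s_B) + α(s) − 1. -/
open LaurentPolynomial

/-- Maximal degree (max of the support), with convention `odeg 0 = 0`. -/
noncomputable def odeg (g : LaurentPolynomial ℤ) : ℤ := g.coeff.support.max.unbotD 0

/-- Minimal degree (min of the support), with convention `udeg 0 = 0`. -/
noncomputable def udeg (g : LaurentPolynomial ℤ) : ℤ := g.coeff.support.min.untopD 0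

/-- The span of a Laurent polynomial. -/
noncomputable def lspan (g : LaurentPolynomial ℤ) : ℤ := odeg g - udeg g

/-- Number of crossings spliced by an A-splice in the state `s`. -/
def alpha {n : ℕ} (s : Fin n → Bool) : ℕ :=
  (Finset.univ.filter (fun i => s i = false)).card

/-- Number of crossings spliced by a B-splice in the state `s`. -/
def beta {n : ℕ} (s : Fin n → Bool) : ℕ :=
  (Finset.univ.filter (fun i => s i = true)).card

/-- A loop-count function: at least one loop in every state, and changing the
splice at one crossing changes the number of loops by at most one. -/
def IsLoopCount {n : ℕ} (f : (Fin n → Bool) → ℕ) : Prop :=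
  (∀ s, 1 ≤ f s) ∧
    ∀ (s : Fin n → Bool) (i : Fin n),
      |(f (Function.update s i (!(s i))) : ℤ) - (f s : ℤ)| ≤ 1

/-- The weight `A^(α(s)-β(s)) * (-A^2 - A^(-2))^(f(s)-1)` of a state `s`. -/
noncomputable def weight {n : ℕ} (f : (Fin n → Bool) → ℕ) (s : Fin n → Bool) :
    LaurentPolynomial ℤ :=
  T ((alpha s : ℤ) - (beta s : ℤ)) * (-T 2 - T (-2)) ^ (f s - 1)

/-- The Kauffman bracket of a loop-count function: the sum of the weights. -/
noncomputable def bracket {n : ℕ} (f : (Fin n → Bool) → ℕ) : LaurentPolynomial ℤ :=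
  ∑ s : Fin n → Bool, weight f s

/-! Turning the A-splices of `s` into B-splices one at a time changes the loop count by at most
one per step, until a single A-splice is left; B-pseudo-adequacy bounds the loop count of that
state by `f s_B`. -/

theorem exists_eq_false_of_alpha_pos {n : ℕ} {s : Fin n → Bool} (h : 0 < alpha s) :
    ∃ i, s i = false := by
  obtain ⟨i, hi⟩ := Finset.card_pos.mp h
  exact ⟨i, by simpa using hi⟩

theorem alpha_update_true_add_one {n : ℕ} {s : Fin n → Bool} {i : Fin n} (hi : s i = false) :
    alpha (Function.update s i true) + 1 = alpha s := by
  have hA : Finset.univ.filter (fun j => Function.update s i true j = false)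
      = (Finset.univ.filter (fun j => s j = false)).erase i := by
    ext j
    by_cases hj : j = i <;> simp [hj, hi]
  rw [alpha, hA, Finset.card_erase_add_one (by simpa using hi), alpha]

theorem exists_eq_update_true_of_alpha_eq_one {n : ℕ} {s : Fin n → Bool} (h : alpha s = 1) :
    ∃ i, s = Function.update (fun _ => true) i false := by
  obtain ⟨i, hi⟩ := Finset.card_eq_one.mp h
  refine ⟨i, funext fun j => ?_⟩
  have hj := Finset.ext_iff.mp hi j
  by_cases hji : j = i
  · subst hji
    simpa using hj
  · simpa [hji] using hj

theorem IsLoopCount.le_update_add_one {n : ℕ} {f : (Fin n → Bool) → ℕ} (hf : IsLoopCount f)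
    (s : Fin n → Bool) (i : Fin n) (b : Bool) :
    (f s : ℤ) ≤ f (Function.update s i b) + 1 := by
  rcases Bool.eq_or_eq_not b (s i) with rfl | rfl
  · simp
  · linarith [(abs_le.mp (hf.2 s i)).1]

/-- If `f` is B-pseudo-adequate, then for every state `s` with `α(s) ≥ 1`,
`f(s) ≤ f(s_B) + α(s) - 1`. -/
theorem loopCount_le_sB_add_alpha_sub_one {n : ℕ} (f : (Fin n → Bool) → ℕ)
    (hf : IsLoopCount f)
    (hB : ∀ i : Fin n, f (Function.update (fun _ => true) i false) ≤ f (fun _ => true))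
    (s : Fin n → Bool) (hs : 1 ≤ alpha s) :
    (f s : ℤ) ≤ (f (fun _ => true) : ℤ) + (alpha s : ℤ) - 1 := by
  generalize hm : alpha s = m at hs ⊢
  induction m, hs using Nat.le_induction generalizing s with
  | base =>
    obtain ⟨i, rfl⟩ := exists_eq_update_true_of_alpha_eq_one hm
    have hBi := hB i
    push_cast
    omega
  | succ m hm1 ih =>
    obtain ⟨i, hi⟩ := exists_eq_false_of_alpha_pos (s := s) (by omega)
    have hflip := alpha_update_true_add_one hi
    have hrest := ih (Function.update s i true) (by omega)
    have hstep := hf.le_update_add_one s i true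
    push_cast
    linarith
end

section
/- Let f be a loop-count function on states of n crossings that is A-pseudo-adequate, i.e. f(Function.update s_A i true) ≤ f(s_A) for every index i. Then for every state s ≠ s_A one has ōdeg w(s) ≤ n + 2 f(s_A) − 4, which is strictly less than ōdeg w(s_A) = n + 2 f(s_A) − 2; consequently the bracket ⟨f⟩ := Σ_s w(s) is nonzero and ōdeg ⟨f⟩ = n + 2 f(s_A) − 2. -/
open LaurentPolynomial

/-! The weight of a state has top term `±A^(α(s) - β(s) + 2 (f(s) - 1))`, because `-A² - A⁻²` has
top term `-A²`. For `s ≠ s_A`, pick a B-splice `i` of `s`: the state with a single B-splice at `i`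
has at most `f(s_A)` loops by pseudo-adequacy and differs from `s` at `β(s) - 1` crossings, each of
which changes the loop count by at most one. Hence `f(s) ≤ f(s_A) + β(s) - 1`, and with
`α(s) = n - β(s)` the top exponent of `w(s)` is at most `n + 2 f(s_A) - 4`, two below that of
`w(s_A)`; so the top term of `w(s_A)` survives in the bracket. -/

namespace LaurentPolynomial

variable {R : Type*} [Semiring R]

theorem degree_le_iff {p : R[T;T⁻¹]} {d : ℤ} : p.degree ≤ d ↔ ∀ m ∈ p.coeff.support, m ≤ d := by
  simp [degree, Finset.max_le_iff]

theorem degree_mul_le (p q : R[T;T⁻¹]) : (p * q).degree ≤ p.degree + q.degree :=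
  AddMonoidAlgebra.supDegree_mul_le (D := WithBot.some) fun _ _ => WithBot.coe_add ..

theorem coeff_mul_add_of_degree_le {p q : R[T;T⁻¹]} {a b : ℤ} (hp : p.degree ≤ a)
    (hq : q.degree ≤ b) : (p * q).coeff (a + b) = p.coeff a * q.coeff b :=
  AddMonoidAlgebra.coeff_mul_add_of_uniqueAdd fun x y hx hy hxy => by
    have := degree_le_iff.mp hp x hx
    have := degree_le_iff.mp hq y hy
    omega

theorem degree_eq_of_le_of_coeff_ne_zero {p : R[T;T⁻¹]} {d : ℤ} (hp : p.degree ≤ d)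
    (hd : p.coeff d ≠ 0) : p.degree = d :=
  hp.antisymm (Finset.le_max (Finsupp.mem_support_iff.mpr hd))

theorem degree_pow_le {p : R[T;T⁻¹]} {a : ℤ} (hp : p.degree ≤ a) (k : ℕ) :
    (p ^ k).degree ≤ (k * a : ℤ) := by
  induction k with
  | zero => simpa using degree_C_le (1 : R)
  | succ k ih =>
    calc (p ^ (k + 1)).degree ≤ (p ^ k).degree + p.degree := pow_succ p k ▸ degree_mul_le _ _
      _ ≤ (k * a : ℤ) + a := add_le_add ih hp
      _ = ((k + 1 : ℕ) * a : ℤ) := by rw [← WithBot.coe_add]; congr 1; push_cast; ring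

theorem coeff_pow_mul_of_degree_le {p : R[T;T⁻¹]} {a : ℤ} (hp : p.degree ≤ a) (k : ℕ) :
    (p ^ k).coeff (k * a) = p.coeff a ^ k := by
  induction k with
  | zero => simp
  | succ k ih =>
    rw [pow_succ, show ((k + 1 : ℕ) * a : ℤ) = k * a + a by push_cast; ring,
      coeff_mul_add_of_degree_le (degree_pow_le hp k) hp, ih, pow_succ]

end LaurentPolynomial

theorem odeg_eq_of_degree_eq {g : ℤ[T;T⁻¹]} {d : ℤ} (h : g.degree = d) : odeg g = d := by
  rw [odeg, ← degree, h, WithBot.unbotD_coe]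

theorem degree_eq_odeg {g : ℤ[T;T⁻¹]} (hg : g ≠ 0) : g.degree = odeg g := by
  obtain ⟨d, hd⟩ := WithBot.ne_bot_iff_exists.mp (mt degree_eq_bot_iff.mp hg)
  rw [← hd, odeg_eq_of_degree_eq hd.symm]

theorem degree_neg_T_two_sub_T_neg_two_le {R : Type*} [Ring R] :
    (-T 2 - T (-2) : R[T;T⁻¹]).degree ≤ (2 : ℤ) :=
  AddMonoidAlgebra.supDegree_sub_le.trans <| sup_le
    (by rw [AddMonoidAlgebra.supDegree_neg]; exact degree_T_le 2)
    ((degree_T_le _).trans (WithBot.coe_le_coe.mpr (by norm_num)))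

theorem coeff_neg_T_two_sub_T_neg_two {R : Type*} [Ring R] :
    (-T 2 - T (-2) : R[T;T⁻¹]).coeff 2 = -1 := by
  simp only [T, AddMonoidAlgebra.coeff_sub, AddMonoidAlgebra.coeff_neg,
    AddMonoidAlgebra.coeff_single]
  simp

theorem odeg_sum_eq_of_forall_odeg_lt {ι : Type*} {s : Finset ι} {g : ι → ℤ[T;T⁻¹]} {i : ι}
    (hi : i ∈ s) (hg : ∀ j ∈ s, g j ≠ 0) (hlt : ∀ j ∈ s, j ≠ i → odeg (g j) < odeg (g i)) :
    ∑ j ∈ s, g j ≠ 0 ∧ odeg (∑ j ∈ s, g j) = odeg (g i) := by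
  have hdeg : (∑ j ∈ s, g j).degree = odeg (g i) := by
    rw [← degree_eq_odeg (hg i hi)]
    refine (AddMonoidAlgebra.supDegree_leadingCoeff_sum_eq hi fun j hj hji => ?_).1
    change (g j).degree < (g i).degree
    rw [degree_eq_odeg (hg j hj), degree_eq_odeg (hg i hi)]
    exact WithBot.coe_lt_coe.mpr (hlt j hj hji)
  exact ⟨fun h => by simp [h] at hdeg, odeg_eq_of_degree_eq hdeg⟩

section Weight

variable {n : ℕ} (f : (Fin n → Bool) → ℕ) (s : Fin n → Bool)

theorem degree_weight :
    (weight f s).degree = ↑((alpha s : ℤ) - beta s + (f s - 1 : ℕ) * 2) := by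
  have hpow := degree_pow_le (degree_neg_T_two_sub_T_neg_two_le (R := ℤ)) (f s - 1)
  apply degree_eq_of_le_of_coeff_ne_zero
  · exact (degree_mul_le _ _).trans (add_le_add (degree_T_le _) hpow)
  · rw [weight, coeff_mul_add_of_degree_le (degree_T_le _) hpow,
      coeff_pow_mul_of_degree_le degree_neg_T_two_sub_T_neg_two_le,
      coeff_neg_T_two_sub_T_neg_two, T, AddMonoidAlgebra.coeff_single, Finsupp.single_eq_same,
      one_mul]
    exact pow_ne_zero _ (neg_ne_zero.mpr one_ne_zero)

theorem weight_ne_zero : weight f s ≠ 0 :=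
  mt degree_eq_bot_iff.mpr (by rw [degree_weight]; exact WithBot.coe_ne_bot)

theorem odeg_weight : odeg (weight f s) = (alpha s : ℤ) - beta s + (f s - 1 : ℕ) * 2 :=
  odeg_eq_of_degree_eq (degree_weight f s)

end Weight

section States

variable {n : ℕ}

theorem alpha_add_beta (s : Fin n → Bool) : alpha s + beta s = n := by
  simpa [alpha, beta] using
    Finset.card_filter_add_card_filter_not (s := Finset.univ) (fun i => s i = false)

namespace IsLoopCount

variable {f : (Fin n → Bool) → ℕ}

theorem le_update_add_one_s8 (hf : IsLoopCount f) (s : Fin n → Bool) (i : Fin n) (b : Bool) :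
    (f s : ℤ) ≤ f (Function.update s i b) + 1 := by
  obtain rfl | rfl : b = s i ∨ b = !s i := by cases b <;> cases s i <;> simp
  · simp
  · linarith [(abs_le.mp (hf.2 s i)).1]

theorem le_add_card (hf : IsLoopCount f) {s t : Fin n → Bool} {S : Finset (Fin n)}
    (h : ∀ i ∉ S, s i = t i) :
    (f s : ℤ) ≤ f t + S.card := by
  classical
  induction S using Finset.induction_on generalizing s with
  | empty => simp [funext fun i => h i (Finset.notMem_empty i)]
  | insert i S hiS ih =>
    have hagree : ∀ j ∉ S, Function.update s i (t i) j = t j := by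
      intro j hj
      by_cases hji : j = i
      · simp [hji]
      · simpa [hji] using h j (by simp [hji, hj])
    have := ih hagree
    have := hf.le_update_add_one_s8 s i (t i)
    rw [Finset.card_insert_of_notMem hiS]
    push_cast
    linarith

end IsLoopCount

def IsAPseudoAdequate (f : (Fin n → Bool) → ℕ) : Prop :=
  ∀ i : Fin n, f (Function.update (fun _ => false) i true) ≤ f (fun _ => false)

theorem le_add_beta_sub_one_of_ne {f : (Fin n → Bool) → ℕ} (hf : IsLoopCount f)
    (hA : IsAPseudoAdequate f) {s : Fin n → Bool} (hs : s ≠ fun _ => false) :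
    (f s : ℤ) ≤ f (fun _ => false) + beta s - 1 := by
  obtain ⟨i, hi⟩ := Function.ne_iff.mp hs
  simp only [ne_eq, Bool.not_eq_false] at hi
  have hiB : i ∈ Finset.univ.filter (fun j => s j = true) := by simpa using hi
  have hagree : ∀ j ∉ (Finset.univ.filter (fun j => s j = true)).erase i,
      s j = Function.update (fun _ => false) i true j := by
    intro j hj
    by_cases hji : j = i
    · simp [hji, hi]
    · simpa [hji] using hj
  have hcard := Finset.card_erase_of_mem hiB
  have hβ := Finset.card_pos.mpr ⟨i, hiB⟩
  have := hf.le_add_card hagree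
  have := hA i
  simp only [beta] at hcard hβ ⊢
  omega

end States

theorem odeg_weight_le_of_ne {n : ℕ} {f : (Fin n → Bool) → ℕ} (hf : IsLoopCount f)
    (hA : IsAPseudoAdequate f) {s : Fin n → Bool} (hs : s ≠ fun _ => false) :
    odeg (weight f s) ≤ (n : ℤ) + 2 * (f (fun _ => false) : ℤ) - 4 := by
  have := alpha_add_beta s
  have := le_add_beta_sub_one_of_ne hf hA hs
  have := hf.1 s
  rw [odeg_weight]
  omega

theorem odeg_weight_const_false {n : ℕ} {f : (Fin n → Bool) → ℕ} (hpos : 1 ≤ f fun _ => false) :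
    odeg (weight f fun _ => false) = (n : ℤ) + 2 * (f (fun _ => false) : ℤ) - 2 := by
  have hα : alpha (fun _ : Fin n => false) = n := by simp [alpha]
  have hβ : beta (fun _ : Fin n => false) = 0 := by simp [beta]
  rw [odeg_weight, hα, hβ]
  omega

/-- If `f` is A-pseudo-adequate, then every state other than `s_A` has weight of
maximal degree at most `n + 2 f(s_A) - 4`, strictly less than
`ōdeg w(s_A) = n + 2 f(s_A) - 2`; consequently the bracket is nonzero and has
maximal degree `n + 2 f(s_A) - 2`. -/
theorem odeg_bracket_of_A_pseudo_adequate {n : ℕ} (f : (Fin n → Bool) → ℕ)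
    (hf : IsLoopCount f)
    (hA : ∀ i : Fin n, f (Function.update (fun _ => false) i true) ≤ f (fun _ => false)) :
    (∀ s : Fin n → Bool, s ≠ (fun _ => false) →
        odeg (weight f s) ≤ (n : ℤ) + 2 * (f (fun _ => false) : ℤ) - 4) ∧
    (n : ℤ) + 2 * (f (fun _ => false) : ℤ) - 4 < odeg (weight f (fun _ => false)) ∧
    odeg (weight f (fun _ => false)) = (n : ℤ) + 2 * (f (fun _ => false) : ℤ) - 2 ∧
    bracket f ≠ 0 ∧
    odeg (bracket f) = (n : ℤ) + 2 * (f (fun _ => false) : ℤ) - 2 := by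
  have hlow := fun s (hs : s ≠ fun _ => false) => odeg_weight_le_of_ne hf hA hs
  have htop := odeg_weight_const_false (hf.1 fun _ => false)
  obtain ⟨hne, hodeg⟩ := odeg_sum_eq_of_forall_odeg_lt (Finset.mem_univ (fun _ => false))
    (fun s _ => weight_ne_zero f s) fun s _ hs => by linarith [hlow s hs]
  exact ⟨hlow, by linarith, htop, hne, hodeg.trans htop⟩
end
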